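/- arXiv:1811.06483 — 4 statements merged into one kernel-verified Lean document; each statement's English description precedes it below -/
import Mathlib

section
/- Let H be a real inner product space and A ⊆ H. Then (for every finite sequence of vectors taken from A, the norm of every partial-sum prefix obtained by deleting the last term is at most the norm of the full sum) if and only if ⟨a,b⟩ ≥ 0 for all a,b ∈ A. Formally: (∀ n, ∀ f : Fin (n+1) → A, ‖∑_{i<n} f(i)‖ ≤ ‖∑_{i<n+1} f(i)‖) ↔ (∀ a b ∈ A, ⟨a,b⟩ ≥ 0). -/
open scoped RealInnerProductSpace

section

variable {H : Type*} [NormedAddCommGroup H] [InnerProductSpace ℝ H]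

theorem norm_le_norm_add_of_inner_nonneg {x y : H} (h : 0 ≤ ⟪x, y⟫) :
    ‖x‖ ≤ ‖x + y‖ := by
  refine pow_le_pow_iff_left₀ (norm_nonneg _) (norm_nonneg _) two_ne_zero |>.mp ?_
  rw [norm_add_sq_real]
  nlinarith [sq_nonneg ‖y‖]

/-- Since `‖n • a + b‖² - ‖n • a‖² = 2 n ⟪a, b⟫ + ‖b‖²`, a negative `⟪a, b⟫` wins
for large `n`. -/
theorem inner_nonneg_of_forall_norm_nsmul_le_norm_nsmul_add {a b : H}
    (h : ∀ n : ℕ, ‖n • a‖ ≤ ‖n • a + b‖) : 0 ≤ ⟪a, b⟫ := by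
  by_contra! hneg
  obtain ⟨n, hn⟩ := exists_nat_gt (‖b‖ ^ 2 / (2 * -⟪a, b⟫))
  have hlarge : ‖b‖ ^ 2 < n * (2 * -⟪a, b⟫) := (div_lt_iff₀ (by linarith)).mp hn
  have hsq : ‖n • a‖ ^ 2 ≤ ‖n • a + b‖ ^ 2 :=
    pow_le_pow_left₀ (norm_nonneg _) (h n) 2
  rw [norm_add_sq_real, ← Nat.cast_smul_eq_nsmul ℝ, real_inner_smul_left] at hsq
  linarith

end

theorem stmt2 {H : Type*} [NormedAddCommGroup H] [InnerProductSpace ℝ H]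
    (A : Set H) :
    (∀ (n : ℕ) (f : Fin (n + 1) → H), (∀ i, f i ∈ A) →
      ‖∑ i : Fin n, f i.castSucc‖ ≤ ‖∑ i : Fin (n + 1), f i‖) ↔
    (∀ a ∈ A, ∀ b ∈ A, 0 ≤ ⟪a, b⟫) := by
  constructor
  · intro h a ha b hb
    refine inner_nonneg_of_forall_norm_nsmul_le_norm_nsmul_add fun n => ?_
    let f : Fin (n + 1) → H := Fin.snoc (fun _ => a) b
    have hmem : ∀ i, f i ∈ A :=
      Fin.lastCases (by simpa [f] using hb) fun i => by simpa [f] using ha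
    simpa [f, Fin.sum_univ_castSucc] using h n f hmem
  · intro h n f hf
    rw [Fin.sum_univ_castSucc]
    exact norm_le_norm_add_of_inner_nonneg <| by
      rw [sum_inner]
      exact Finset.sum_nonneg fun i _ => h _ (hf _) _ (hf _)
end

section
/- Let H be a real inner product space, a, b ∈ H with ⟨a,b⟩ ≥ 0, ‖a‖ ≤ ‖b‖, and suppose ⟨a,b⟩ ≤ μ·‖b‖² for some 0 < μ < 1. Then for every natural number m ≥ 2, treating (m±1)/2 as real scalars, ‖((m+1)/2)·b + ((m-1)/2)·a‖² ≤ m²·(3/4 + μ/4)·‖b‖². In particular, setting λ = √(3/4 + μ/4) < 1, ‖((m+1)/2)·b + ((m-1)/2)·a‖ ≤ λ·m·‖b‖. -/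
open scoped RealInnerProductSpace

theorem stmt5 {H : Type*} [NormedAddCommGroup H] [InnerProductSpace ℝ H]
    (a b : H) (μ : ℝ) (hμ0 : 0 < μ) (hμ1 : μ < 1)
    (hab : 0 ≤ ⟪a, b⟫) (hba : ‖a‖ ≤ ‖b‖) (habμ : ⟪a, b⟫ ≤ μ * ‖b‖ ^ 2)
    (m : ℕ) (hm : 2 ≤ m) :
    ‖(((m : ℝ) + 1) / 2) • b + (((m : ℝ) - 1) / 2) • a‖ ^ 2
        ≤ (m : ℝ) ^ 2 * (3 / 4 + μ / 4) * ‖b‖ ^ 2 ∧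
    Real.sqrt (3 / 4 + μ / 4) < 1 ∧
    ‖(((m : ℝ) + 1) / 2) • b + (((m : ℝ) - 1) / 2) • a‖
        ≤ Real.sqrt (3 / 4 + μ / 4) * (m : ℝ) * ‖b‖ := by
  have hm2 : (2:ℝ) ≤ (m:ℝ) := by exact_mod_cast hm
  set p : ℝ := ((m:ℝ) + 1) / 2 with hpdef
  set q : ℝ := ((m:ℝ) - 1) / 2 with hqdef
  have hp : 0 ≤ p := by rw [hpdef]; linarith
  have hq : 0 ≤ q := by rw [hqdef]; linarith
  have hexp : ‖p • b + q • a‖ ^ 2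
      = p ^ 2 * ‖b‖ ^ 2 + 2 * (p * q) * ⟪a, b⟫ + q ^ 2 * ‖a‖ ^ 2 := by
    rw [norm_add_sq_real, real_inner_smul_left, real_inner_smul_right,
      norm_smul, norm_smul, real_inner_comm]
    simp only [Real.norm_eq_abs, abs_of_nonneg hp, abs_of_nonneg hq]
    ring
  have ha2 : ‖a‖ ^ 2 ≤ ‖b‖ ^ 2 := by
    nlinarith [norm_nonneg a, norm_nonneg b]
  have h1 : ‖p • b + q • a‖ ^ 2 ≤ (m : ℝ) ^ 2 * (3 / 4 + μ / 4) * ‖b‖ ^ 2 := by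
    rw [hexp]
    have key : 2 * (p * q) * ⟪a, b⟫ ≤ 2 * (p * q) * (μ * ‖b‖ ^ 2) :=
      mul_le_mul_of_nonneg_left habμ (by positivity)
    have key2 : q ^ 2 * ‖a‖ ^ 2 ≤ q ^ 2 * ‖b‖ ^ 2 :=
      mul_le_mul_of_nonneg_left ha2 (sq_nonneg q)
    have hs : p ^ 2 + 2 * (p * q) * μ + q ^ 2 ≤ (m : ℝ) ^ 2 * (3 / 4 + μ / 4) := by
      rw [hpdef, hqdef]
      nlinarith [mul_nonneg (sub_nonneg.2 hμ1.le)
        (by nlinarith : (0:ℝ) ≤ (m:ℝ) ^ 2 - 2)]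
    nlinarith [sq_nonneg ‖b‖, mul_le_mul_of_nonneg_right hs (sq_nonneg ‖b‖)]
  have hc : (0:ℝ) ≤ 3 / 4 + μ / 4 := by linarith
  have h2 : Real.sqrt (3 / 4 + μ / 4) < 1 := by
    have : (3 / 4 + μ / 4 : ℝ) < 1 := by linarith
    calc Real.sqrt (3 / 4 + μ / 4) < Real.sqrt 1 := Real.sqrt_lt_sqrt hc this
      _ = 1 := Real.sqrt_one
  refine ⟨h1, h2, ?_⟩
  have hmn : (0:ℝ) ≤ (m:ℝ) := by linarith
  have hsq : ((m : ℝ) ^ 2 * (3 / 4 + μ / 4) * ‖b‖ ^ 2)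
      = (Real.sqrt (3 / 4 + μ / 4) * (m : ℝ) * ‖b‖) ^ 2 := by
    rw [mul_pow, mul_pow, Real.sq_sqrt hc]; ring
  have h3 := Real.sqrt_le_sqrt (hsq ▸ h1)
  rwa [Real.sqrt_sq (norm_nonneg _), Real.sqrt_sq (by positivity)] at h3
end

section
/- Let A = {ξ₁, -ξ₁, ξ₂, -ξ₂, ..., ξ_k, -ξ_k} ⊆ ℝ^k, where ξᵢ are the standard basis vectors. There exists δ > 0 such that every compact set K ⊆ ℝ^k with Hausdorff distance less than δ from A is strongly positively dependent. -/
/-!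
If `K` contains points `uᵢ, wᵢ` within `δ` of `eᵢ` and `-eᵢ`, then writing `y = ∑ yᵢ eᵢ` and
replacing each `±eᵢ` by its neighbour in `K` gives a point of the cone generated by `K` at
distance at most `δ ∑ |yᵢ| ≤ δ √k ‖y‖ < ‖y‖` from `y`. Iterating this approximation on the
error term shows that the cone is dense, so its closure is the whole space.
-/

/-- The convex cone generated by a set: all finite linear combinations of
elements of the set with nonnegative coefficients. -/
def convCone {E : Type*} [AddCommMonoid E] [Module ℝ E] (A : Set E) : Set E :=
  {x | ∃ (n : ℕ) (c : Fin n → ℝ) (v : Fin n → E),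
    (∀ i, 0 ≤ c i) ∧ (∀ i, v i ∈ A) ∧ x = ∑ i, c i • v i}

open Finset

theorem convCone_eq_hull {E : Type*} [AddCommMonoid E] [Module ℝ E] (s : Set E) :
    convCone s = PointedCone.hull ℝ s := by
  ext x
  rw [SetLike.mem_coe, Submodule.mem_span_set']
  constructor
  · rintro ⟨n, c, v, hc, hv, rfl⟩
    exact ⟨n, fun i => ⟨c i, hc i⟩, fun i => ⟨v i, hv i⟩, rfl⟩
  · rintro ⟨n, c, v, rfl⟩
    exact ⟨n, fun i => c i, fun i => v i, fun i => (c i).2, fun i => (v i).2, rfl⟩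

theorem AddSubmonoid.dense_of_forall_exists_norm_sub_le {E : Type*} [SeminormedAddCommGroup E]
    (S : AddSubmonoid E) {r : ℝ} (hr₀ : 0 ≤ r) (hr₁ : r < 1)
    (h : ∀ y, ∃ z ∈ S, ‖y - z‖ ≤ r * ‖y‖) : Dense (S : Set E) := by
  have approx_pow : ∀ n : ℕ, ∀ y, ∃ z ∈ S, ‖y - z‖ ≤ r ^ n * ‖y‖ := by
    intro n
    induction n with
    | zero => exact fun y => ⟨0, S.zero_mem, by simp⟩
    | succ n ih =>
      intro y
      obtain ⟨z₁, hz₁, h₁⟩ := h y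
      obtain ⟨z₂, hz₂, h₂⟩ := ih (y - z₁)
      refine ⟨z₁ + z₂, S.add_mem hz₁ hz₂, ?_⟩
      calc ‖y - (z₁ + z₂)‖ = ‖y - z₁ - z₂‖ := by rw [sub_add_eq_sub_sub]
        _ ≤ r ^ n * (r * ‖y‖) := h₂.trans (by gcongr)
        _ = r ^ (n + 1) * ‖y‖ := by ring
  refine Metric.dense_iff.2 fun y ε hε => ?_
  obtain ⟨n, hn⟩ := exists_pow_lt_of_lt_one (div_pos hε (by positivity : 0 < ‖y‖ + 1)) hr₁
  obtain ⟨z, hz, hyz⟩ := approx_pow n y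
  refine ⟨z, ?_, hz⟩
  rw [Metric.mem_ball, dist_comm, dist_eq_norm]
  calc ‖y - z‖ ≤ r ^ n * ‖y‖ := hyz
    _ ≤ r ^ n * (‖y‖ + 1) := by gcongr; linarith
    _ < ε := (lt_div_iff₀ (by positivity)).1 hn

theorem norm_smul_sub_posPart_smul_add_negPart_smul_le {E : Type*} [SeminormedAddCommGroup E]
    [NormedSpace ℝ E] (a : ℝ) {v u w : E} {ε : ℝ} (hu : ‖v - u‖ ≤ ε) (hw : ‖-v - w‖ ≤ ε) :
    ‖a • v - (a⁺ • u + a⁻ • w)‖ ≤ |a| * ε := by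
  have split : a • v - (a⁺ • u + a⁻ • w) = a⁺ • (v - u) + a⁻ • (-v - w) := by
    rw [show a • v = (a⁺ - a⁻) • v by rw [posPart_sub_negPart]]
    simp only [smul_sub, smul_neg, sub_smul]
    abel
  calc ‖a • v - (a⁺ • u + a⁻ • w)‖ ≤ a⁺ * ‖v - u‖ + a⁻ * ‖-v - w‖ := by
        rw [split]
        refine (norm_add_le _ _).trans ?_
        rw [norm_smul, norm_smul, Real.norm_of_nonneg (posPart_nonneg a),
          Real.norm_of_nonneg (negPart_nonneg a)]
    _ ≤ a⁺ * ε + a⁻ * ε := by gcongr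
    _ = |a| * ε := by rw [← add_mul, posPart_add_negPart]

theorem PointedCone.exists_mem_norm_sum_smul_sub_le {E ι : Type*} [SeminormedAddCommGroup E]
    [NormedSpace ℝ E] [Fintype ι] (C : PointedCone ℝ E) {v u w : ι → E} {ε : ℝ}
    (huC : ∀ i, u i ∈ C) (hwC : ∀ i, w i ∈ C)
    (hu : ∀ i, ‖v i - u i‖ ≤ ε) (hw : ∀ i, ‖-v i - w i‖ ≤ ε) (a : ι → ℝ) :
    ∃ z ∈ C, ‖∑ i, a i • v i - z‖ ≤ ε * ∑ i, |a i| := by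
  refine ⟨∑ i, ((a i)⁺ • u i + (a i)⁻ • w i),
    C.sum_mem fun i _ => C.add_mem (C.smul_mem (posPart_nonneg _) (huC i))
      (C.smul_mem (negPart_nonneg _) (hwC i)), ?_⟩
  rw [← sum_sub_distrib, mul_sum]
  refine (norm_sum_le _ _).trans (sum_le_sum fun i _ => ?_)
  rw [mul_comm]
  exact norm_smul_sub_posPart_smul_add_negPart_smul_le (a i) (hu i) (hw i)

theorem EuclideanSpace.sum_abs_le_sqrt_card_mul_norm {ι : Type*} [Fintype ι]
    (y : EuclideanSpace ℝ ι) : ∑ i, |y i| ≤ √(Fintype.card ι) * ‖y‖ := by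
  simpa [EuclideanSpace.norm_eq, sq_abs] using
    Real.sum_mul_le_sqrt_mul_sqrt univ (fun _ => (1 : ℝ)) (fun i => |y i|)

theorem EuclideanSpace.sum_smul_single {ι : Type*} [Fintype ι] [DecidableEq ι]
    (y : EuclideanSpace ℝ ι) : ∑ i, y i • EuclideanSpace.single i (1 : ℝ) = y := by
  simpa using (EuclideanSpace.basisFun ι ℝ).sum_repr y

theorem stmt8_general (k : ℕ)
    (A : Set (EuclideanSpace ℝ (Fin k)))
    (hA : A = {x | ∃ i : Fin k, x = EuclideanSpace.single i (1 : ℝ) ∨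
      x = -EuclideanSpace.single i (1 : ℝ)}) :
    ∃ δ > (0 : ℝ), ∀ K : Set (EuclideanSpace ℝ (Fin k)), IsCompact K →
      Metric.hausdorffDist K A < δ →
      ∀ x ∈ K, -x ∈ closure (convCone K) := by
  set δ : ℝ := 1 / (√k + 1)
  refine ⟨δ, by positivity, fun K hK hKA x hxK => ?_⟩
  have hAb : Bornology.IsBounded A := by
    refine (Metric.isBounded_closedBall (x := 0) (r := 1)).subset ?_
    rw [hA]
    rintro z ⟨i, rfl | rfl⟩ <;> simp
  have near : ∀ v ∈ A, ∃ u ∈ K, ‖v - u‖ ≤ δ := fun v hv => by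
    obtain ⟨u, hu, h⟩ := Metric.exists_dist_lt_of_hausdorffDist_lt' hv hKA
      (Metric.hausdorffEDist_ne_top_of_nonempty_of_bounded ⟨x, hxK⟩ ⟨v, hv⟩ hK.isBounded hAb)
    exact ⟨u, hu, by rw [← dist_eq_norm, dist_comm]; exact h.le⟩
  choose u hu huv using fun i => near _ (hA ▸ ⟨i, Or.inl rfl⟩ : EuclideanSpace.single i 1 ∈ A)
  choose w hw hwv using fun i => near _ (hA ▸ ⟨i, Or.inr rfl⟩ : -EuclideanSpace.single i 1 ∈ A)
  have approx : ∀ y, ∃ z ∈ PointedCone.hull ℝ K, ‖y - z‖ ≤ (√k * δ) * ‖y‖ := fun y => by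
    obtain ⟨z, hz, h⟩ := (PointedCone.hull ℝ K).exists_mem_norm_sum_smul_sub_le
      (fun i => PointedCone.subset_hull (hu i)) (fun i => PointedCone.subset_hull (hw i))
      huv hwv (fun i => y i)
    refine ⟨z, hz, ?_⟩
    rw [EuclideanSpace.sum_smul_single] at h
    calc ‖y - z‖ ≤ δ * ∑ i, |y i| := h
      _ ≤ δ * (√k * ‖y‖) := by
        gcongr
        simpa using EuclideanSpace.sum_abs_le_sqrt_card_mul_norm y
      _ = (√k * δ) * ‖y‖ := by ring
  have dense := (PointedCone.hull ℝ K).toAddSubmonoid.dense_of_forall_exists_norm_sub_le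
    (by positivity) (by rw [mul_one_div, div_lt_one (by positivity)]; linarith) approx
  rw [convCone_eq_hull]
  exact dense.closure_eq ▸ Set.mem_univ (-x)

theorem stmt8 (k : ℕ) (hk : 0 < k)
    (A : Set (EuclideanSpace ℝ (Fin k)))
    (hA : A = {x | ∃ i : Fin k, x = EuclideanSpace.single i (1 : ℝ) ∨
      x = -EuclideanSpace.single i (1 : ℝ)}) :
    ∃ δ > (0 : ℝ), ∀ K : Set (EuclideanSpace ℝ (Fin k)), IsCompact K →
      Metric.hausdorffDist K A < δ →
      ∀ x ∈ K, -x ∈ closure (convCone K) :=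
  stmt8_general k A hA
end

section
/- Every compact set K ⊆ ℝ^k within Hausdorff distance 1/2 of the singleton {ξ₁} (where ξ₁ is the first standard basis vector) fails to be strongly positively dependent. -/
section Cone

variable {E : Type*} [AddCommGroup E] [Module ℝ E] [TopologicalSpace E]

lemma nonneg_of_mem_closure_convCone {A : Set E} (f : E →L[ℝ] ℝ) (hA : ∀ a ∈ A, 0 ≤ f a)
    {x : E} (hx : x ∈ closure (convCone A)) : 0 ≤ f x := by
  refine closure_minimal ?_ (isClosed_le continuous_const f.continuous) hx
  rintro _ ⟨n, c, v, hc, hv, rfl⟩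
  simp only [Set.mem_ofPred, map_sum, map_smul, smul_eq_mul]
  exact Finset.sum_nonneg fun i _ => mul_nonneg (hc i) (hA _ (hv i))

lemma neg_notMem_closure_convCone {A : Set E} (f : E →L[ℝ] ℝ) (hA : ∀ a ∈ A, 0 < f a)
    {x : E} (hx : x ∈ A) : -x ∉ closure (convCone A) := fun hneg => by
  have := nonneg_of_mem_closure_convCone f (fun a ha => (hA a ha).le) hneg
  linarith [map_neg f x, hA x hx]

end Cone

lemma dist_lt_of_hausdorffDist_singleton_lt {X : Type*} [PseudoMetricSpace X] {K : Set X}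
    {e : X} {r : ℝ} (hKb : Bornology.IsBounded K) (hKne : K.Nonempty)
    (hK : Metric.hausdorffDist K {e} < r) {y : X} (hy : y ∈ K) : dist y e < r := by
  have hfin := Metric.hausdorffEDist_ne_top_of_nonempty_of_bounded hKne
    (Set.singleton_nonempty e) hKb Bornology.isBounded_singleton
  have := Metric.infDist_le_hausdorffDist_of_mem hy hfin
  rw [Metric.infDist_singleton] at this
  exact this.trans_lt hK

lemma half_lt_apply_of_dist_single_lt {ι : Type*} [Fintype ι] [DecidableEq ι] {i : ι}
    {y : EuclideanSpace ℝ ι} (hy : dist y (EuclideanSpace.single i 1) < 1 / 2) :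
    1 / 2 < y i := by
  have hcoord := (PiLp.dist_apply_le y (EuclideanSpace.single i (1 : ℝ)) i).trans_lt hy
  rw [PiLp.single_apply, if_pos rfl, Real.dist_eq] at hcoord
  linarith [(abs_lt.mp hcoord).1]

theorem stmt9 (k : ℕ) (hk : 0 < k)
    (K : Set (EuclideanSpace ℝ (Fin k))) (hKc : IsCompact K) (hKne : K.Nonempty)
    (hK : Metric.hausdorffDist K {EuclideanSpace.single (⟨0, hk⟩ : Fin k) (1 : ℝ)} < 1 / 2) :
    ∃ x ∈ K, -x ∉ closure (convCone K) := by
  have hpos : ∀ y ∈ K, 0 < EuclideanSpace.proj (⟨0, hk⟩ : Fin k) y := fun y hy =>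
    one_half_pos.trans <| half_lt_apply_of_dist_single_lt <|
      dist_lt_of_hausdorffDist_singleton_lt hKc.isBounded hKne hK hy
  obtain ⟨x, hx⟩ := hKne
  exact ⟨x, hx, neg_notMem_closure_convCone _ hpos hx⟩
end
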